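/- arXiv:1211.6353 — 6 statements merged into one kernel-verified Lean document; each statement's English description precedes it below -/
import Mathlib

section
/- For any simple game on n voters, the total number of swings m = Σ_i η_i satisfies n ≤ m ≤ (⌊n/2⌋+1)·C(n, ⌊n/2⌋+1), where η_i is the number of i-swings of voter i. -/
open Finset

structure SimpleGame (n : ℕ) where
  w : Finset (Fin n) → Bool
  mono : ∀ ⦃U V : Finset (Fin n)⦄, U ⊆ V → w U = true → w V = true
  empty_losing : w ∅ = false
  univ_winning : w Finset.univ = true

def isSwing {n : ℕ} (χ : Finset (Fin n) → Bool) (i : Fin n) (U : Finset (Fin n)) : Prop :=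
  i ∉ U ∧ χ U = false ∧ χ (insert i U) = true

instance {n : ℕ} (χ : Finset (Fin n) → Bool) (i : Fin n) : DecidablePred (isSwing χ i) :=
  fun U => by unfold isSwing; infer_instance

def eta {n : ℕ} (χ : Finset (Fin n) → Bool) (i : Fin n) : ℕ :=
  (Finset.univ.filter (isSwing χ i)).card

def totalSwings {n : ℕ} (χ : Finset (Fin n) → Bool) : ℕ := ∑ i, eta χ i

def BZ {n : ℕ} (χ : Finset (Fin n) → Bool) (i : Fin n) : ℚ :=
  (eta χ i : ℚ) / (totalSwings χ : ℚ)

def SS {n : ℕ} (χ : Finset (Fin n) → Bool) (i : Fin n) : ℚ :=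
  (∑ U ∈ Finset.univ.filter (isSwing χ i),
      (Nat.factorial U.card * Nat.factorial (n - U.card - 1) : ℚ)) / (Nat.factorial n : ℚ)


/-! Weight each pair (i, U) with i ∉ U by |U|! (n - 1 - |U|)!. For any set function f, the weighted
sum of the marginal contributions f (U ∪ {i}) - f U telescopes to n! (f N - f ∅): a set S occurs
positively, as U ∪ {i} with i ∈ S, and negatively, as U with i ∉ S, both times with total coefficient
|S|! (n - |S|)!, except that S = ∅ never occurs positively and S = N never negatively (this is the
efficiency of the Shapley value). For a simple game the marginal contributions are the swing
indicators, so the weights of all swings add up to n!. Every weight lies between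
(n - 1)! / C(n - 1, ⌊n/2⌋) and (n - 1)!, hence n ≤ m ≤ n C(n - 1, ⌊n/2⌋) = (⌊n/2⌋ + 1) C(n, ⌊n/2⌋ + 1). -/

open Nat

def shapleyWeight (n k : ℕ) : ℕ := k ! * (n - 1 - k)!

lemma succ_mul_shapleyWeight (n k : ℕ) :
    (k + 1) * shapleyWeight n k = (k + 1)! * (n - (k + 1))! := by
  rw [shapleyWeight, factorial_succ, mul_assoc, Nat.sub_sub, add_comm 1 k]

lemma sub_mul_shapleyWeight {n k : ℕ} (hk : k < n) :
    (n - k) * shapleyWeight n k = k ! * (n - k)! := by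
  obtain ⟨j, hj⟩ : ∃ j, n - k = j + 1 := ⟨n - 1 - k, by omega⟩
  rw [shapleyWeight, hj, factorial_succ, show n - 1 - k = j by omega]
  ring

lemma shapleyWeight_le_factorial {n k : ℕ} (hk : k < n) : shapleyWeight n k ≤ (n - 1)! :=
  le_of_dvd (factorial_pos _) (factorial_mul_factorial_dvd_factorial (by omega))

lemma factorial_le_choose_mul_shapleyWeight {n k : ℕ} (hk : k < n) :
    (n - 1)! ≤ (n - 1).choose (n / 2) * shapleyWeight n k := by
  rw [← choose_mul_factorial_mul_factorial (show k ≤ n - 1 by omega), mul_assoc, shapleyWeight,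
    Nat.sub_sub, add_comm 1 k, ← Nat.sub_sub]
  gcongr
  rw [← choose_symm_of_eq_add (show n - 1 = (n - 1) / 2 + n / 2 by omega)]
  exact choose_le_middle k (n - 1)

section Marginals

variable {α : Type*} [Fintype α] [DecidableEq α]

lemma sum_sum_notMem_eq_sum_sum_erase {M : Type*} [AddCommMonoid M] (g : α → Finset α → M) :
    ∑ i, ∑ U ∈ univ.filter (i ∉ ·), g i U = ∑ S, ∑ i ∈ S, g i (S.erase i) := calc
  _ = ∑ i, ∑ S ∈ univ.filter (i ∈ ·), g i (erase S i) := by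
    refine sum_congr rfl fun i _ => sum_nbij' (insert i) (fun S => erase S i) ?_ ?_ ?_ ?_ ?_ <;>
      simp_all
  _ = ∑ S, ∑ i ∈ S, g i (S.erase i) := sum_comm' (by simp)

lemma sum_sum_notMem_eq_sum_card_compl_smul {M : Type*} [AddCommMonoid M] (h : Finset α → M) :
    ∑ i, ∑ U ∈ univ.filter (i ∉ ·), h U = ∑ U, #Uᶜ • h U := calc
  _ = ∑ U, ∑ i ∈ Uᶜ, h U := sum_comm' (by simp)
  _ = ∑ U, #Uᶜ • h U := sum_congr rfl fun U _ => sum_const _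

lemma sum_shapleyWeight_card_erase (S : Finset α) :
    ∑ i ∈ S, (shapleyWeight (Fintype.card α) #(S.erase i) : ℤ)
      = (#S)! * (Fintype.card α - #S)! - if S = ∅ then ((Fintype.card α)! : ℤ) else 0 := by
  rcases S.eq_empty_or_nonempty with rfl | hS
  · simp
  obtain ⟨k, hk⟩ : ∃ k, #S = k + 1 := ⟨#S - 1, by have := hS.card_pos; omega⟩
  have hcard : ∀ i ∈ S, #(S.erase i) = k := fun i hi => by rw [card_erase_of_mem hi, hk]; rfl
  rw [sum_congr rfl fun i hi => by rw [hcard i hi], sum_const, hk, if_neg hS.ne_empty, sub_zero,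
    nsmul_eq_mul]
  exact_mod_cast succ_mul_shapleyWeight _ k

lemma card_compl_mul_shapleyWeight (U : Finset α) :
    (#Uᶜ * shapleyWeight (Fintype.card α) #U : ℤ)
      = (#U)! * (Fintype.card α - #U)! - if U = univ then ((Fintype.card α)! : ℤ) else 0 := by
  rcases eq_or_ne U univ with rfl | hU
  · simp
  rw [card_compl, if_neg hU, sub_zero]
  exact_mod_cast sub_mul_shapleyWeight ((card_lt_iff_ne_univ U).2 hU)

theorem sum_shapleyWeight_mul_marginal (f : Finset α → ℤ) :
    ∑ i, ∑ U ∈ univ.filter (i ∉ ·),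
        (shapleyWeight (Fintype.card α) #U : ℤ) * (f (insert i U) - f U)
      = (Fintype.card α)! * (f univ - f ∅) := by
  have hinsert : ∀ S : Finset α,
      ∑ i ∈ S, (shapleyWeight (Fintype.card α) #(S.erase i) : ℤ) * f (insert i (S.erase i))
        = (∑ i ∈ S, (shapleyWeight (Fintype.card α) #(S.erase i) : ℤ)) * f S :=
    fun S => by rw [sum_mul]; exact sum_congr rfl fun i hi => by rw [insert_erase hi]
  simp only [mul_sub, sum_sub_distrib, sum_sum_notMem_eq_sum_card_compl_smul,
    sum_sum_notMem_eq_sum_sum_erase fun i U => (shapleyWeight (Fintype.card α) #U : ℤ) *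
      f (insert i U), hinsert, sum_shapleyWeight_card_erase, nsmul_eq_mul, ← mul_assoc,
    card_compl_mul_shapleyWeight, sub_mul, sum_sub_distrib, ite_mul, zero_mul, sum_ite_eq',
    mem_univ, if_true, sub_sub_sub_cancel_left]

end Marginals

namespace SimpleGame

variable {n : ℕ}

lemma ne_zero (G : SimpleGame n) : n ≠ 0 := by
  rintro rfl
  simpa [Subsingleton.elim (univ : Finset (Fin 0)) ∅, G.empty_losing] using G.univ_winning

def swings (G : SimpleGame n) : Finset (Σ _ : Fin n, Finset (Fin n)) :=
  univ.sigma fun i => univ.filter (isSwing G.w i)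

lemma card_swings (G : SimpleGame n) : #G.swings = totalSwings G.w :=
  card_sigma _ _

lemma card_lt_of_mem_swings (G : SimpleGame n) {p : Σ _ : Fin n, Finset (Fin n)}
    (hp : p ∈ G.swings) : #p.2 < n := by
  simp only [swings, mem_sigma, mem_filter, mem_univ, true_and] at hp
  simpa using (card_lt_iff_ne_univ p.2).2 fun h => hp.1 (by simp [h])

lemma marginal_eq_ite_isSwing (G : SimpleGame n) {i : Fin n} {U : Finset (Fin n)} (hi : i ∉ U) :
    ((if G.w (insert i U) then 1 else 0) - (if G.w U then 1 else 0) : ℤ)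
      = if isSwing G.w i U then 1 else 0 := by
  have hmono := @G.mono U (insert i U) (subset_insert i U)
  cases hU : G.w U <;> cases hV : G.w (insert i U) <;> simp_all [isSwing]

lemma sum_shapleyWeight_swings (G : SimpleGame n) :
    ∑ p ∈ G.swings, shapleyWeight n #p.2 = n ! := by
  have h := sum_shapleyWeight_mul_marginal fun S : Finset (Fin n) => if G.w S then (1 : ℤ) else 0
  have hswings : ∀ i, ∑ U ∈ univ.filter (i ∉ ·), (shapleyWeight n #U : ℤ) *
      ((if G.w (insert i U) then 1 else 0) - (if G.w U then 1 else 0))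
        = ∑ U ∈ univ.filter (isSwing G.w i), (shapleyWeight n #U : ℤ) := by
    intro i
    rw [sum_filter, sum_filter]
    refine sum_congr rfl fun U _ => ?_
    by_cases hi : i ∈ U
    · simp [hi, isSwing]
    · rw [if_pos hi, G.marginal_eq_ite_isSwing hi, mul_ite, mul_one, mul_zero]
  simp only [Fintype.card_fin, hswings, G.univ_winning, G.empty_losing, if_true, Bool.false_eq_true,
    if_false, sub_zero, mul_one] at h
  rw [swings, sum_sigma]
  exact_mod_cast h

end SimpleGame

lemma choose_pred_half_mul {n : ℕ} (hn : n ≠ 0) :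
    (n - 1).choose (n / 2) * n = (n / 2 + 1) * n.choose (n / 2 + 1) := by
  obtain ⟨m, rfl⟩ := exists_eq_add_one_of_ne_zero hn
  rw [Nat.add_sub_cancel, mul_comm, add_one_mul_choose_eq, mul_comm]

/-- For any simple game on n voters the total number of swings m satisfies
n ≤ m ≤ (⌊n/2⌋+1)·C(n,⌊n/2⌋+1). -/
theorem totalSwings_bounds {n : ℕ} (G : SimpleGame n) :
    n ≤ totalSwings G.w ∧
    totalSwings G.w ≤ (n / 2 + 1) * Nat.choose n (n / 2 + 1) := by
  have hfact : n * (n - 1)! = n ! := mul_factorial_pred G.ne_zero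
  rw [← G.card_swings, ← choose_pred_half_mul G.ne_zero]
  constructor
  · have hle : n ! ≤ #G.swings * (n - 1)! := by
      rw [← G.sum_shapleyWeight_swings, ← smul_eq_mul]
      exact sum_le_card_nsmul _ _ _ fun p hp =>
        shapleyWeight_le_factorial (G.card_lt_of_mem_swings hp)
    rw [← hfact] at hle
    exact le_of_mul_le_mul_right hle (factorial_pos _)
  · have hle : #G.swings * (n - 1)! ≤ (n - 1).choose (n / 2) * n ! := by
      rw [← G.sum_shapleyWeight_swings, mul_sum, ← smul_eq_mul]
      exact card_nsmul_le_sum _ _ _ fun p hp =>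
        factorial_le_choose_mul_shapleyWeight (G.card_lt_of_mem_swings hp)
    rw [← hfact, ← mul_assoc] at hle
    exact le_of_mul_le_mul_right hle (factorial_pos _)
end

section
/- For a simple game on n voters and any two voters i, j, either BZ(χ,i) = BZ(χ,j) or |BZ(χ,i) − BZ(χ,j)| ≥ 2 / ((⌊n/2⌋+1)·C(n, ⌊n/2⌋+1)). -/
open Finset

lemma eta_eq {n : ℕ} (G : SimpleGame n) (i : Fin n) :
    (eta G.w i : ℤ) =
      2 * ((univ.filter (fun V => G.w V = true)).filter (fun V => i ∈ V)).card
        - (univ.filter (fun V => G.w V = true)).card := by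
  classical
  set f : Finset (Fin n) → ℤ := fun V => if G.w V = true then 1 else 0 with hf
  have h1 : (eta G.w i : ℤ) = ∑ U ∈ univ.filter (fun U : Finset (Fin n) => i ∉ U),
      (f (insert i U) - f U) := by
    have hcong : ∀ U ∈ univ.filter (fun U : Finset (Fin n) => i ∉ U),
        f (insert i U) - f U = if isSwing G.w i U then 1 else 0 := by
      intro U hU
      simp only [mem_filter, mem_univ, true_and] at hU
      rcases hb : G.w U with _ | _
      · rcases hb2 : G.w (insert i U) with _ | _
        · simp [hf, hb, hb2, isSwing]
        · simp [hf, hb, hb2, isSwing, hU]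
      · have : G.w (insert i U) = true := G.mono (subset_insert i U) hb
        simp [hf, hb, this, isSwing]
    rw [Finset.sum_congr rfl hcong, Finset.sum_boole, Finset.filter_filter, eta]
    congr 2
    apply Finset.filter_congr
    intro U _
    simp only [isSwing]
    tauto
  have h2 : ∑ U ∈ univ.filter (fun U : Finset (Fin n) => i ∉ U), f (insert i U)
      = ∑ V ∈ univ.filter (fun V : Finset (Fin n) => i ∈ V), f V := by
    apply Finset.sum_nbij' (fun U => insert i U) (fun V => V.erase i)
    · intro U hU; simp only [mem_filter, mem_univ, true_and] at hU ⊢; exact mem_insert_self i U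
    · intro V hV; simp only [mem_filter, mem_univ, true_and] at hV ⊢; exact notMem_erase i V
    · intro U hU; simp only [mem_filter, mem_univ, true_and] at hU
      exact Finset.erase_insert hU
    · intro V hV; simp only [mem_filter, mem_univ, true_and] at hV
      exact Finset.insert_erase hV
    · intro U hU; rfl
  have h3 : ∀ (s : Finset (Finset (Fin n))), ∑ V ∈ s, f V
      = ((s.filter (fun V => G.w V = true)).card : ℤ) := by
    intro s; rw [hf, Finset.sum_boole]
  rw [h1, Finset.sum_sub_distrib, h2, h3, h3]
  have hcomm : ∀ (p : Finset (Fin n) → Prop) [DecidablePred p],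
      ((univ.filter p).filter (fun V => G.w V = true)).card
        = ((univ.filter (fun V => G.w V = true)).filter p).card := by
    intro p _; rw [Finset.filter_comm]
  rw [hcomm, hcomm]
  set W := univ.filter (fun V : Finset (Fin n) => G.w V = true)
  have hsplit : (W.filter (fun V => i ∈ V)).card + (W.filter (fun V => i ∉ V)).card = W.card :=
    Finset.card_filter_add_card_filter_not (fun V => i ∈ V)
  push_cast [← hsplit]
  ring

lemma sum_ident (n : ℕ) : ∀ (j t : ℕ), t + j = n + 1 →
    ∑ k ∈ Ico t (n+1), ((2*k : ℤ) - n) * (n.choose k) = t * n.choose t := by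
  intro j
  induction j with
  | zero =>
    intro t ht
    simp only [Nat.add_zero] at ht
    subst ht
    rw [Ico_self, Finset.sum_empty, Nat.choose_succ_self]
    simp
  | succ j ih =>
    intro t ht
    have hlt : t < n + 1 := by omega
    rw [Finset.sum_eq_sum_Ico_succ_bot hlt, ih (t+1) (by omega)]
    have hkey : ((t:ℤ)+1) * n.choose (t+1) = ((n:ℤ) - t) * n.choose t := by
      have h := Nat.choose_succ_right_eq n t
      have h' : ((n.choose (t+1) * (t+1) : ℕ) : ℤ) = ((n.choose t * (n - t) : ℕ) : ℤ) :=
        congrArg Int.ofNat h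
      push_cast [Nat.cast_sub (by omega : t ≤ n)] at h'
      linarith
    push_cast
    linarith

lemma total_eq {n : ℕ} (G : SimpleGame n) :
    (totalSwings G.w : ℤ) =
      ∑ V ∈ univ.filter (fun V => G.w V = true), (2 * (V.card : ℤ) - n) := by
  classical
  set W := univ.filter (fun V : Finset (Fin n) => G.w V = true) with hW
  have hsum : ∑ i : Fin n, ((W.filter (fun V => i ∈ V)).card : ℤ) = ∑ V ∈ W, (V.card : ℤ) := by
    have h1 : ∀ i : Fin n, ((W.filter (fun V => i ∈ V)).card : ℤ)
        = ∑ V ∈ W, (if i ∈ V then (1:ℤ) else 0) := fun i => (Finset.sum_boole _ _).symm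
    rw [Finset.sum_congr rfl (fun i _ => h1 i), Finset.sum_comm]
    refine Finset.sum_congr rfl fun V _ => ?_
    rw [Finset.sum_boole]
    congr 1
    simp [Finset.filter_mem_eq_inter]
  have hcast : (totalSwings G.w : ℤ) = ∑ i : Fin n, (eta G.w i : ℤ) := by
    rw [totalSwings]; push_cast; rfl
  rw [hcast, Finset.sum_congr rfl (fun i _ => eta_eq G i)]
  simp only [Finset.sum_sub_distrib]
  simp only [Finset.sum_const, Finset.card_univ, Fintype.card_fin, nsmul_eq_mul,
    ← Finset.mul_sum]
  rw [hsum]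
  ring

lemma total_le {n : ℕ} (G : SimpleGame n) :
    (totalSwings G.w : ℤ) ≤ (n/2+1 : ℕ) * n.choose (n/2+1) := by
  classical
  set t : ℕ := n/2+1 with ht
  rw [total_eq]
  have step1 : ∑ V ∈ univ.filter (fun V : Finset (Fin n) => G.w V = true),
      (2 * (V.card : ℤ) - n)
      ≤ ∑ V : Finset (Fin n), max (2 * (V.card : ℤ) - n) 0 := by
    calc ∑ V ∈ univ.filter (fun V : Finset (Fin n) => G.w V = true), (2 * (V.card : ℤ) - n)
        ≤ ∑ V ∈ univ.filter (fun V : Finset (Fin n) => G.w V = true),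
            max (2 * (V.card : ℤ) - n) 0 :=
          Finset.sum_le_sum (fun V _ => le_max_left _ _)
      _ ≤ ∑ V : Finset (Fin n), max (2 * (V.card : ℤ) - n) 0 :=
          Finset.sum_le_sum_of_subset_of_nonneg (Finset.subset_univ _)
            (fun V _ _ => le_max_right _ _)
  have step2 : ∑ V : Finset (Fin n), max (2 * (V.card : ℤ) - n) 0
      = ∑ m ∈ Finset.range (n+1), n.choose m • max (2 * (m : ℤ) - n) 0 := by
    rw [← Finset.powerset_univ,
      Finset.sum_powerset_apply_card (fun m => max (2 * (m : ℤ) - n) 0)]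
    simp [Finset.card_univ]
  have step3 : ∑ m ∈ Finset.range (n+1), n.choose m • max (2 * (m : ℤ) - n) 0
      = ∑ k ∈ Ico t (n+1), ((2*k : ℤ) - n) * (n.choose k) := by
    rw [Finset.range_eq_Ico,
      ← Finset.sum_Ico_consecutive _ (Nat.zero_le t) (by omega : t ≤ n+1)]
    have hzero : ∑ m ∈ Ico 0 t, n.choose m • max (2 * (m : ℤ) - n) 0 = 0 := by
      apply Finset.sum_eq_zero
      intro m hm
      simp only [Finset.mem_Ico] at hm
      have : 2 * (m:ℤ) - n ≤ 0 := by
        have h1 : m ≤ n/2 := by omega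
        have h2 : 2 * (n/2) ≤ n := by omega
        have : (m:ℤ) ≤ ((n/2 : ℕ) : ℤ) := by exact_mod_cast h1
        have : 2 * (m:ℤ) ≤ (n:ℤ) := by
          calc 2 * (m:ℤ) ≤ 2 * ((n/2 : ℕ) : ℤ) := by linarith
            _ ≤ n := by exact_mod_cast h2
        linarith
      rw [max_eq_right this]
      simp
    rw [hzero, zero_add]
    refine Finset.sum_congr rfl fun m hm => ?_
    simp only [Finset.mem_Ico] at hm
    have hpos : 0 ≤ 2 * (m:ℤ) - n := by
      have h1 : t ≤ m := hm.1
      have h2 : n < 2 * t := by omega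
      have : (n:ℤ) < 2 * (t:ℤ) := by exact_mod_cast h2
      have : (t:ℤ) ≤ m := by exact_mod_cast h1
      omega
    rw [max_eq_left hpos, nsmul_eq_mul]
    ring
  calc _ ≤ _ := step1
    _ = _ := step2
    _ = _ := step3
    _ = (t : ℤ) * n.choose t := sum_ident n (n+1-t) t (by omega)

/-- For a simple game on n voters and two voters i, j either the Banzhaf values coincide or
they differ by at least 2/((⌊n/2⌋+1)·C(n,⌊n/2⌋+1)). -/
theorem banzhaf_gap {n : ℕ} (G : SimpleGame n) (i j : Fin n) :
    BZ G.w i = BZ G.w j ∨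
    (2 : ℚ) / ((n / 2 + 1) * Nat.choose n (n / 2 + 1) : ℚ) ≤ |BZ G.w i - BZ G.w j| := by
  by_cases hbz : BZ G.w i = BZ G.w j
  · exact Or.inl hbz
  right
  have hm0 : totalSwings G.w ≠ 0 := by
    intro h; exact hbz (by simp [BZ, h])
  have hmpos : (0:ℚ) < (totalSwings G.w : ℚ) := by
    exact_mod_cast Nat.pos_of_ne_zero hm0
  have hne : eta G.w i ≠ eta G.w j := by
    intro h; exact hbz (by rw [BZ, BZ, h])
  have hi := eta_eq G i
  have hj := eta_eq G j
  set ai := ((univ.filter (fun V => G.w V = true)).filter (fun V => i ∈ V)).card with hai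
  set aj := ((univ.filter (fun V => G.w V = true)).filter (fun V => j ∈ V)).card with haj
  have hdiff : (eta G.w i : ℤ) - eta G.w j = 2 * ((ai:ℤ) - aj) := by
    rw [hi, hj]; ring
  have h2 : (2:ℤ) ≤ |(eta G.w i : ℤ) - eta G.w j| := by
    have hne' : (ai:ℤ) - aj ≠ 0 := by
      intro h0
      apply hne
      have : (eta G.w i : ℤ) = eta G.w j := by rw [hi, hj]; omega
      exact_mod_cast this
    have h1 : 1 ≤ |(ai:ℤ) - aj| := Int.one_le_abs hne'
    rw [hdiff, abs_mul]
    have : |(2:ℤ)| = 2 := by norm_num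
    rw [this]
    linarith
  have h2q : (2:ℚ) ≤ |(eta G.w i : ℚ) - (eta G.w j : ℚ)| := by
    have : ((|(eta G.w i : ℤ) - eta G.w j| : ℤ) : ℚ) = |(eta G.w i : ℚ) - eta G.w j| := by
      push_cast [Int.cast_abs]
      ring_nf
    rw [← this]
    exact_mod_cast h2
  have hd : BZ G.w i - BZ G.w j
      = ((eta G.w i : ℚ) - eta G.w j) / (totalSwings G.w : ℚ) := by
    rw [BZ, BZ, div_sub_div_same]
  rw [hd, abs_div, abs_of_pos hmpos]
  apply div_le_div₀ (abs_nonneg _) h2q hmpos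
  have hle1 : (totalSwings G.w : ℚ) ≤ ((n/2+1 : ℕ) : ℚ) * (n.choose (n/2+1) : ℚ) := by
    have := total_le G
    exact_mod_cast this
  have hle2 : ((n/2+1 : ℕ) : ℚ) ≤ (n : ℚ)/2 + 1 := by
    have h1 : 2 * (n/2) ≤ n := by omega
    have h2 : ((2 * (n/2) : ℕ) : ℚ) ≤ (n : ℚ) := by exact_mod_cast h1
    push_cast at h2 ⊢
    linarith
  calc (totalSwings G.w : ℚ) ≤ ((n/2+1 : ℕ) : ℚ) * (n.choose (n/2+1) : ℚ) := hle1
    _ ≤ ((n : ℚ)/2 + 1) * (n.choose (n/2+1) : ℚ) :=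
        mul_le_mul_of_nonneg_right hle2 (by positivity)
end

section
/- For the sequences k_m, l_m of Conjecture 1 (k_1=1, l_1=2, l_2=5, with k_m = 2k_{m−1}, l_m = 2l_{m−1}+3 for even m and k_m = 8k_{m−1}−1, l_m = 8l_{m−1}−2 for odd m ≥ 3), the sequence k_m/l_m is strictly decreasing for m ≥ 2 and satisfies k_m/l_m > 14/37 > 1/3 for all m ≥ 2. -/
def kseq : ℕ → ℤ
  | 0 => 0
  | 1 => 1
  | (m + 2) => if (m + 2) % 2 = 0 then 2 * kseq (m + 1) else 8 * kseq (m + 1) - 1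

def lseq : ℕ → ℤ
  | 0 => 0
  | 1 => 2
  | 2 => 5
  | (m + 3) => if (m + 3) % 2 = 0 then 2 * lseq (m + 2) + 3 else 8 * lseq (m + 2) - 2

/-- τ(m) = ((−1)^{m+1}+1)/2: equals 1 for odd m and 0 for even m. -/
def tau (m : ℕ) : ℕ := if m % 2 = 1 then 1 else 0

lemma kseq_lseq_key : ∀ m : ℕ, 2 ≤ m →
    1 ≤ kseq m ∧ 2 * kseq m + 1 ≤ lseq m ∧
      37 * kseq m - 14 * lseq m = (if m % 2 = 0 then 4 else 23) := by
  intro m hm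
  induction m with
  | zero => omega
  | succ n ih =>
    rcases Nat.lt_or_ge n 2 with h | h
    · interval_cases n
      · omega
      · norm_num [kseq, lseq]
    · obtain ⟨p, rfl⟩ : ∃ p, n = p + 2 := ⟨n - 2, by omega⟩
      obtain ⟨hk, hl, he⟩ := ih (by omega)
      have hk3 : kseq (p + 3) = if (p + 3) % 2 = 0 then 2 * kseq (p + 2)
          else 8 * kseq (p + 2) - 1 := rfl
      have hl3 : lseq (p + 3) = if (p + 3) % 2 = 0 then 2 * lseq (p + 2) + 3
          else 8 * lseq (p + 2) - 2 := rfl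
      rw [show p + 2 + 1 = p + 3 from rfl, hk3, hl3]
      split_ifs at he ⊢ <;> omega

/-- For m ≥ 2 the quotients k_m / l_m are strictly decreasing and satisfy
k_m / l_m > 14/37 > 1/3. -/
theorem kseq_div_lseq_antitone_and_bounded :
    (∀ m : ℕ, 2 ≤ m → (kseq (m + 1) : ℚ) / (lseq (m + 1) : ℚ) < (kseq m : ℚ) / (lseq m : ℚ)) ∧
    (∀ m : ℕ, 2 ≤ m → (14 : ℚ) / 37 < (kseq m : ℚ) / (lseq m : ℚ)) ∧
    (1 : ℚ) / 3 < (14 : ℚ) / 37 := by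
  refine ⟨?_, ?_, by norm_num⟩
  · intro m hm
    obtain ⟨hk, hl, he⟩ := kseq_lseq_key m hm
    obtain ⟨hk', hl', he'⟩ := kseq_lseq_key (m + 1) (by omega)
    have hlm : (0 : ℚ) < (lseq m : ℚ) := by exact_mod_cast (by omega : (0:ℤ) < lseq m)
    have hlm' : (0 : ℚ) < (lseq (m + 1) : ℚ) := by
      exact_mod_cast (by omega : (0:ℤ) < lseq (m + 1))
    rw [div_lt_div_iff₀ hlm' hlm]
    have key : kseq (m + 1) * lseq m < kseq m * lseq (m + 1) := by
      obtain ⟨p, rfl⟩ : ∃ p, m = p + 2 := ⟨m - 2, by omega⟩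
      have hk3 : kseq (p + 3) = if (p + 3) % 2 = 0 then 2 * kseq (p + 2)
          else 8 * kseq (p + 2) - 1 := rfl
      have hl3 : lseq (p + 3) = if (p + 3) % 2 = 0 then 2 * lseq (p + 2) + 3
          else 8 * lseq (p + 2) - 2 := rfl
      rw [show p + 2 + 1 = p + 3 from rfl, hk3, hl3]
      split_ifs with h
      · nlinarith
      · nlinarith
    exact_mod_cast key
  · intro m hm
    obtain ⟨hk, hl, he⟩ := kseq_lseq_key m hm
    have hlm : (0 : ℚ) < (lseq m : ℚ) := by exact_mod_cast (by omega : (0:ℤ) < lseq m)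
    rw [div_lt_div_iff₀ (by norm_num) hlm]
    have key : 14 * lseq m < kseq m * 37 := by split_ifs at he <;> omega
    exact_mod_cast key
end

section
/- Suppose for every simple game χ' on 2 voters the Banzhaf vector (B(χ',1), B(χ',2)) is one of (1,0), (0,1), (1/2,1/2). Assume the Alon–Edelman theorem: for n > k, 0 < ε < 1/(k+1), if Σ_{i=k+1}^n B(χ,i) ≤ ε, then there is a simple game χ' on k voters with Σ_{i=1}^k |B(χ,i)−B(χ',i)| + Σ_{i=k+1}^n B(χ,i) ≤ (2k+1)ε/(1−(k+1)ε) + ε. Then for every simple game χ on n ≥ 3 voters, the ℓ₁-distance of the Banzhaf vector B(χ) to d = (3/4, 1/4, 0, …, 0) is at least 1/9. -/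
open Finset

/-- The desired power distribution (3/4, 1/4, 0, …, 0). -/
def dHard (n : ℕ) : Fin n → ℚ := fun i => if i.val = 0 then 3 / 4 else if i.val = 1 then 1 / 4 else 0


lemma totalSwings_pos {n : ℕ} (G : SimpleGame n) : 0 < totalSwings G.w := by
  obtain ⟨U, hU, hmin⟩ := Finset.exists_min_image
    (Finset.univ.filter (fun U => G.w U = true)) Finset.card
    ⟨Finset.univ, by simp [G.univ_winning]⟩
  have hUwin : G.w U = true := (Finset.mem_filter.mp hU).2
  have hUne : U.Nonempty := by
    rcases U.eq_empty_or_nonempty with h | h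
    · exfalso; rw [h, G.empty_losing] at hUwin; simp at hUwin
    · exact h
  obtain ⟨i, hi⟩ := hUne
  have hswing : isSwing G.w i (U.erase i) := by
    refine ⟨Finset.notMem_erase i U, ?_, ?_⟩
    · by_contra h
      have hwin : G.w (U.erase i) = true := by
        cases hh : G.w (U.erase i) with
        | false => exact absurd hh h
        | true => rfl
      have := hmin (U.erase i) (by simp [hwin])
      have hc := Finset.card_erase_lt_of_mem hi
      omega
    · rw [Finset.insert_erase hi]; exact hUwin
  have h1 : 0 < eta G.w i := by
    apply Finset.card_pos.mpr
    exact ⟨U.erase i, Finset.mem_filter.mpr ⟨Finset.mem_univ _, hswing⟩⟩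
  have h2 : eta G.w i ≤ totalSwings G.w :=
    Finset.single_le_sum (f := eta G.w) (fun _ _ => Nat.zero_le _) (Finset.mem_univ i)
  omega

lemma BZ_nonneg {n : ℕ} (G : SimpleGame n) (i : Fin n) : 0 ≤ BZ G.w i := by
  unfold BZ; positivity

lemma sum_BZ {n : ℕ} (G : SimpleGame n) : ∑ i, BZ G.w i = 1 := by
  have h := totalSwings_pos G
  have h' : (totalSwings G.w : ℚ) ≠ 0 := by positivity
  unfold BZ
  rw [← Finset.sum_div]
  rw [show (∑ i, (eta G.w i : ℚ)) = (totalSwings G.w : ℚ) by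
    unfold totalSwings; push_cast; rfl]
  exact div_self h'

lemma abs_key (a b c : ℚ) : |b - c| - |a - b| ≤ |a - c| := by
  have h := abs_sub_le b a c
  have h2 : |b - a| = |a - b| := abs_sub_comm b a
  linarith

/-- Assuming the classification of Banzhaf vectors for 2 voters and the Alon–Edelman theorem,
every simple game on n ≥ 3 voters has Banzhaf vector at ℓ₁-distance at least 1/9 from
(3/4, 1/4, 0, …, 0). -/
theorem banzhaf_far_from_hard
    (h2 : ∀ G : SimpleGame 2,
      (BZ G.w 0 = 1 ∧ BZ G.w 1 = 0) ∨ (BZ G.w 0 = 0 ∧ BZ G.w 1 = 1) ∨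
      (BZ G.w 0 = 1 / 2 ∧ BZ G.w 1 = 1 / 2))
    (hAE : ∀ (n k : ℕ) (hk : k < n) (ε : ℚ), 0 < ε → ε < 1 / (k + 1) →
      ∀ G : SimpleGame n,
        (∑ i ∈ Finset.univ.filter (fun i : Fin n => k ≤ i.val), BZ G.w i) ≤ ε →
        ∃ G' : SimpleGame k,
          (∑ i : Fin k, |BZ G.w (Fin.castLE hk.le i) - BZ G'.w i|) +
            (∑ i ∈ Finset.univ.filter (fun i : Fin n => k ≤ i.val), BZ G.w i) ≤
          (2 * k + 1) * ε / (1 - (k + 1) * ε) + ε) :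
    ∀ (n : ℕ), 3 ≤ n → ∀ G : SimpleGame n,
      (1 : ℚ) / 9 ≤ ∑ i, |BZ G.w i - dHard n i| := by
  intro n hn G
  have h0 : 0 < n := by omega
  have h1 : 1 < n := by omega
  set i0 : Fin n := ⟨0, h0⟩ with hi0
  set i1 : Fin n := ⟨1, h1⟩ with hi1
  have hsplit : ∀ g : Fin n → ℚ, ∑ i, g i =
      g i0 + g i1 + ∑ i ∈ Finset.univ.filter (fun i : Fin n => 2 ≤ i.val), g i := by
    intro g
    rw [← Finset.sum_filter_add_sum_filter_not Finset.univ (fun i : Fin n => i.val < 2)]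
    congr 1
    · have hset : Finset.univ.filter (fun i : Fin n => i.val < 2) = {i0, i1} := by
        ext j
        simp only [Finset.mem_filter, Finset.mem_univ, true_and, Finset.mem_insert,
          Finset.mem_singleton, Fin.ext_iff, hi0, hi1]
        omega
      rw [hset, Finset.sum_pair (by simp [hi0, hi1, Fin.ext_iff])]
    · apply Finset.sum_congr _ (fun _ _ => rfl)
      apply Finset.filter_congr
      intro j _
      simp only [not_lt]
  set T : ℚ := ∑ i ∈ Finset.univ.filter (fun i : Fin n => 2 ≤ i.val), BZ G.w i with hT
  have hT0 : 0 ≤ T := Finset.sum_nonneg (fun i _ => BZ_nonneg G i)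
  have hd0 : dHard n i0 = 3 / 4 := by simp [dHard, hi0]
  have hd1 : dHard n i1 = 1 / 4 := by simp [dHard, hi1]
  have hDsplit : ∑ i, |BZ G.w i - dHard n i| =
      |BZ G.w i0 - 3 / 4| + |BZ G.w i1 - 1 / 4| + T := by
    rw [hsplit (fun i => |BZ G.w i - dHard n i|), hd0, hd1]
    congr 1
    apply Finset.sum_congr rfl
    intro j hj
    have hj2 : 2 ≤ j.val := (Finset.mem_filter.mp hj).2
    have : dHard n j = 0 := by
      simp only [dHard]
      rw [if_neg (by omega), if_neg (by omega)]
    rw [this, sub_zero, abs_of_nonneg (BZ_nonneg G j)]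
  rw [hDsplit]
  rcases le_or_gt T (1 / 18) with hle | hgt
  · have hk : (2 : ℕ) < n := by omega
    obtain ⟨G', hbound⟩ := hAE n 2 hk (1 / 18) (by norm_num) (by norm_num) G hle
    rw [Fin.sum_univ_two] at hbound
    have hc0 : Fin.castLE hk.le (0 : Fin 2) = i0 := by
      apply Fin.ext; simp [hi0]
    have hc1 : Fin.castLE hk.le (1 : Fin 2) = i1 := by
      apply Fin.ext; simp [hi1]
    rw [hc0, hc1] at hbound
    have hrhs : (2 * (2:ℕ) + 1) * (1/18) / (1 - ((2:ℕ) + 1) * (1/18)) + 1/18 = (7:ℚ)/18 := by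
      norm_num
    rw [hrhs] at hbound
    have k0 : ∀ b : ℚ, |b - 3/4| - |BZ G.w i0 - b| ≤ |BZ G.w i0 - 3/4| :=
      fun b => abs_key _ b _
    have k1 : ∀ b : ℚ, |b - 1/4| - |BZ G.w i1 - b| ≤ |BZ G.w i1 - 1/4| :=
      fun b => abs_key _ b _
    rcases h2 G' with ⟨e0, e1⟩ | ⟨e0, e1⟩ | ⟨e0, e1⟩ <;>
      rw [e0, e1] at hbound <;>
      [ (have := k0 1; have := k1 0); (have := k0 0; have := k1 1);
        (have := k0 (1/2); have := k1 (1/2))] <;>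
      · simp only [show |(1:ℚ) - 3/4| = 1/4 by norm_num,
          show |(0:ℚ) - 1/4| = 1/4 by norm_num,
          show |(0:ℚ) - 3/4| = 3/4 by norm_num,
          show |(1:ℚ) - 1/4| = 3/4 by norm_num,
          show |(1/2:ℚ) - 3/4| = 1/4 by norm_num,
          show |(1/2:ℚ) - 1/4| = 1/4 by norm_num] at *
        linarith
  · have hsum : BZ G.w i0 + BZ G.w i1 + T = 1 := by
      rw [← hsplit (BZ G.w)]; exact sum_BZ G
    have ha0 : 3/4 - BZ G.w i0 ≤ |BZ G.w i0 - 3/4| := by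
      rw [abs_sub_comm]; exact le_abs_self _
    have ha1 : 1/4 - BZ G.w i1 ≤ |BZ G.w i1 - 1/4| := by
      rw [abs_sub_comm]; exact le_abs_self _
    linarith
end

section
/- Let d = (d₁, d₂) with d₁ ≥ d₂ ≥ 0 and d₁ + d₂ = 1. If the achievable power vectors for 2 voters are exactly (1,0) and (1/2,1/2) (up to the ordering d₁ ≥ d₂), then min over achievable vectors s of ‖d − s‖₁ equals 1/2 if and only if d = (3/4, 1/4); for every other such d the minimum is strictly less than 1/2. -/
/-- For 2 voters with achievable power vectors (1,0) and (1/2,1/2), the minimal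
ℓ₁-distance of a monotone normalized target d equals 1/2 iff d = (3/4, 1/4), and is
strictly less than 1/2 otherwise. -/
theorem classification_two_voters (d₁ d₂ : ℝ) (h0 : 0 ≤ d₂) (h21 : d₂ ≤ d₁)
    (hsum : d₁ + d₂ = 1) :
    (min (|d₁ - 1| + |d₂ - 0|) (|d₁ - 1 / 2| + |d₂ - 1 / 2|) = 1 / 2 ↔
      (d₁, d₂) = (3 / 4, 1 / 4)) ∧
    ((d₁, d₂) ≠ (3 / 4, 1 / 4) →
      min (|d₁ - 1| + |d₂ - 0|) (|d₁ - 1 / 2| + |d₂ - 1 / 2|) < 1 / 2) := by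
  have h1 : |d₁ - 1| = 1 - d₁ := by rw [abs_of_nonpos (by linarith)]; ring
  have h2 : |d₂ - 0| = d₂ := by rw [sub_zero]; exact abs_of_nonneg h0
  have h3 : |d₁ - 1 / 2| = d₁ - 1 / 2 := abs_of_nonneg (by linarith)
  have h4 : |d₂ - 1 / 2| = 1 / 2 - d₂ := by rw [abs_of_nonpos (by linarith)]; ring
  rw [h1, h2, h3, h4]
  have key : min (1 - d₁ + d₂) (d₁ - 1 / 2 + (1 / 2 - d₂)) =
      min (2 - 2 * d₁) (2 * d₁ - 1) := by
    congr 1 <;> linarith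
  rw [key]
  simp only [Prod.mk.injEq]
  constructor
  · constructor
    · intro h
      rcases min_cases (2 - 2 * d₁) (2 * d₁ - 1) with ⟨he, hle⟩ | ⟨he, hle⟩ <;>
        rw [he] at h <;> constructor <;> linarith
    · rintro ⟨rfl, rfl⟩
      norm_num
  · intro hne
    have hd : d₁ ≠ 3 / 4 := by
      intro h
      exact hne (by rw [Prod.mk.injEq]; exact ⟨h, by linarith⟩)
    rcases lt_or_gt_of_ne hd with h | h
    · exact lt_of_le_of_lt (min_le_right _ _) (by linarith)
    · exact lt_of_le_of_lt (min_le_left _ _) (by linarith)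
end

section
/- Let S = {(1,0,0), (2/3,1/6,1/6), (1/2,1/2,0), (1/3,1/3,1/3)} ⊂ ℝ³ and let D = {(d₁,d₂,d₃) : d₁ ≥ d₂ ≥ d₃ ≥ 0, d₁+d₂+d₃ = 1}. Then for every d ∈ D, min_{s∈S} ‖d−s‖₁ ≤ 1/3, and equality holds exactly on the union of the five segments: {d₁=5/6, 1/12 ≤ d₂ ≤ 1/6}; {2/3 ≤ d₁ ≤ 5/6, d₃=0}; {1/2 ≤ d₁ ≤ 2/3, d₂=1/3}; {d₁=1/2, 1/4 ≤ d₂ ≤ 1/3}; {5/12 ≤ d₁ ≤ 1/2, d₃=1/6}. -/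
/-- ℓ₁-distance on ℝ³ (as triples). -/
def dist1 (a b : ℝ × ℝ × ℝ) : ℝ := |a.1 - b.1| + |a.2.1 - b.2.1| + |a.2.2 - b.2.2|

set_option maxHeartbeats 4000000 in
/-- For 3 voters and the Shapley-Shubik index with achievable vectors
S = {(1,0,0), (2/3,1/6,1/6), (1/2,1/2,0), (1/3,1/3,1/3)}: every monotone normalized
target d has min distance ≤ 1/3, with equality exactly on five segments. -/
theorem classification_three_voters_SS (d₁ d₂ d₃ : ℝ) (h32 : d₃ ≤ d₂) (h21 : d₂ ≤ d₁)
    (h0 : 0 ≤ d₃) (hsum : d₁ + d₂ + d₃ = 1) :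
    (∃ s ∈ ({((1 : ℝ), (0 : ℝ), (0 : ℝ)), (2 / 3, 1 / 6, 1 / 6), (1 / 2, 1 / 2, 0),
        (1 / 3, 1 / 3, 1 / 3)} : Set (ℝ × ℝ × ℝ)), dist1 (d₁, d₂, d₃) s ≤ 1 / 3) ∧
    ((∀ s ∈ ({((1 : ℝ), (0 : ℝ), (0 : ℝ)), (2 / 3, 1 / 6, 1 / 6), (1 / 2, 1 / 2, 0),
        (1 / 3, 1 / 3, 1 / 3)} : Set (ℝ × ℝ × ℝ)), 1 / 3 ≤ dist1 (d₁, d₂, d₃) s) ↔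
      ((d₁ = 5 / 6 ∧ 1 / 12 ≤ d₂ ∧ d₂ ≤ 1 / 6) ∨
       (2 / 3 ≤ d₁ ∧ d₁ ≤ 5 / 6 ∧ d₃ = 0) ∨
       (1 / 2 ≤ d₁ ∧ d₁ ≤ 2 / 3 ∧ d₂ = 1 / 3) ∨
       (d₁ = 1 / 2 ∧ 1 / 4 ≤ d₂ ∧ d₂ ≤ 1 / 3) ∨
       (5 / 12 ≤ d₁ ∧ d₁ ≤ 1 / 2 ∧ d₃ = 1 / 6))) := by
  have e1 : |d₁ - 1| = -(d₁ - 1) := abs_of_nonpos (by linarith)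
  have e2 : |d₁ - 1/3| = d₁ - 1/3 := abs_of_nonneg (by linarith)
  have e3 : |d₃ - 1/3| = -(d₃ - 1/3) := abs_of_nonpos (by linarith)
  have e4 : |d₂ - 1/2| = -(d₂ - 1/2) := abs_of_nonpos (by linarith)
  have e5 : |d₂| = d₂ := abs_of_nonneg (by linarith)
  have e6 : |d₃| = d₃ := abs_of_nonneg h0
  constructor
  · -- existence of a point at distance ≤ 1/3
    rcases le_total (5/6) d₁ with h56 | h56
    · refine ⟨(1,0,0), by norm_num, ?_⟩
      simp only [dist1, sub_zero]
      linarith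
    · rcases le_total (1/2) d₁ with h12 | h12
      · rcases le_total (1/3) d₂ with h23 | h23
        · refine ⟨(1/2, 1/2, 0), by norm_num, ?_⟩
          simp only [dist1, sub_zero]
          rcases abs_cases (d₁ - 1/2) with ⟨f2, g2⟩ | ⟨f2, g2⟩ <;> linarith
        · refine ⟨(2/3, 1/6, 1/6), by norm_num, ?_⟩
          simp only [dist1]
          rcases abs_cases (d₁ - 2/3) with ⟨f3, g3⟩ | ⟨f3, g3⟩ <;>
            rcases abs_cases (d₂ - 1/6) with ⟨f4, g4⟩ | ⟨f4, g4⟩ <;>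
              rcases abs_cases (d₃ - 1/6) with ⟨f5, g5⟩ | ⟨f5, g5⟩ <;> linarith
      · rcases le_total d₃ (1/6) with h36 | h36
        · refine ⟨(1/2, 1/2, 0), by norm_num, ?_⟩
          simp only [dist1, sub_zero]
          rcases abs_cases (d₁ - 1/2) with ⟨f2, g2⟩ | ⟨f2, g2⟩ <;> linarith
        · refine ⟨(1/3, 1/3, 1/3), by norm_num, ?_⟩
          simp only [dist1]
          rcases abs_cases (d₂ - 1/3) with ⟨f1, g1⟩ | ⟨f1, g1⟩ <;> linarith
  · constructor
    · -- forward: all distances ≥ 1/3 → on one of the five segments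
      intro h
      have h1 := h (1, 0, 0) (by norm_num)
      have h2 := h (2/3, 1/6, 1/6) (by norm_num)
      have h3 := h (1/2, 1/2, 0) (by norm_num)
      have h4 := h (1/3, 1/3, 1/3) (by norm_num)
      simp only [dist1, sub_zero] at h1 h2 h3 h4
      rcases abs_cases (d₂ - 1/3) with ⟨f1, g1⟩ | ⟨f1, g1⟩ <;>
        rcases abs_cases (d₁ - 1/2) with ⟨f2, g2⟩ | ⟨f2, g2⟩ <;>
          rcases abs_cases (d₁ - 2/3) with ⟨f3, g3⟩ | ⟨f3, g3⟩ <;>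
            rcases abs_cases (d₂ - 1/6) with ⟨f4, g4⟩ | ⟨f4, g4⟩ <;>
              rcases abs_cases (d₃ - 1/6) with ⟨f5, g5⟩ | ⟨f5, g5⟩ <;>
                first
                  | exact Or.inl ⟨by linarith, by linarith, by linarith⟩
                  | exact Or.inr (Or.inl ⟨by linarith, by linarith, by linarith⟩)
                  | exact Or.inr (Or.inr (Or.inl ⟨by linarith, by linarith, by linarith⟩))
                  | exact Or.inr (Or.inr (Or.inr (Or.inl ⟨by linarith, by linarith, by linarith⟩)))
                  | exact Or.inr (Or.inr (Or.inr (Or.inr ⟨by linarith, by linarith, by linarith⟩)))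
    · -- reverse: on a segment → all distances ≥ 1/3
      intro hd s hs
      have a1 := le_abs_self (d₁ - 1); have a1' := neg_abs_le (d₁ - 1)
      have a2 := le_abs_self (d₁ - 2/3); have a2' := neg_abs_le (d₁ - 2/3)
      have a3 := le_abs_self (d₁ - 1/2); have a3' := neg_abs_le (d₁ - 1/2)
      have a4 := le_abs_self (d₁ - 1/3); have a4' := neg_abs_le (d₁ - 1/3)
      have b1 := le_abs_self d₂; have b1' := neg_abs_le d₂
      have b2 := le_abs_self (d₂ - 1/6); have b2' := neg_abs_le (d₂ - 1/6)
      have b3 := le_abs_self (d₂ - 1/2); have b3' := neg_abs_le (d₂ - 1/2)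
      have b4 := le_abs_self (d₂ - 1/3); have b4' := neg_abs_le (d₂ - 1/3)
      have c1 := le_abs_self d₃; have c1' := neg_abs_le d₃
      have c2 := le_abs_self (d₃ - 1/6); have c2' := neg_abs_le (d₃ - 1/6)
      have c3 := le_abs_self (d₃ - 1/3); have c3' := neg_abs_le (d₃ - 1/3)
      simp only [Set.mem_insert_iff, Set.mem_singleton_iff] at hs
      rcases hs with rfl | rfl | rfl | rfl <;>
        simp only [dist1, sub_zero] <;>
          rcases hd with ⟨p, q, r⟩ | ⟨p, q, r⟩ | ⟨p, q, r⟩ | ⟨p, q, r⟩ | ⟨p, q, r⟩ <;> linarith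
end
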